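/- arXiv:1805.03632 — 4 statements merged into one kernel-verified Lean document; each statement's English description precedes it below -/
import Mathlib

section
/- Let N ≥ 1 and let A₁, A₂ be N×N complex matrices. Define E : ℂ → M_N(ℂ) by E(z) = (arctan(|z|)/|z|) · ( (Re z)·A₂ + (Im z)·A₁ ) for z ≠ 0 and E(0) = 0. Then E is real-analytic on all of ℂ (regarded as a map from ℝ² to the real vector space of N×N complex matrices). -/
/-!
Away from the origin, `arctan ‖z‖ / ‖z‖` is a composition of analytic functions, since the
norm of an inner product space is analytic off `0`. Near the origin,
`arctan x / x = ∑ (-1)ⁿ x²ⁿ / (2n + 1)` is a power series in `x² = ‖z‖²`, which is analytic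
everywhere. The factor multiplying it vanishes at `0`, so the junk value `arctan 0 / 0 = 0`
does no harm.
-/
attribute [local instance] Matrix.normedAddCommGroup Matrix.normedSpace

open Real FormalMultilinearSeries
open scoped ContDiff

/-- The Taylor series of `arctan x / x`, as a power series in `x ^ 2`. -/
noncomputable def arctanDivSeries : FormalMultilinearSeries ℝ ℝ ℝ :=
  ofScalars ℝ fun n => (-1) ^ n / (2 * n + 1)

lemma one_le_radius_arctanDivSeries : 1 ≤ arctanDivSeries.radius := by
  refine le_radius_of_bound _ 1 fun n => ?_
  have hodd : (1 : ℝ) ≤ 2 * n + 1 := by linarith [n.cast_nonneg (α := ℝ)]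
  rw [arctanDivSeries, ofScalars_norm, NNReal.coe_one, one_pow, mul_one, norm_div, norm_pow,
    norm_neg, norm_one, one_pow, Real.norm_of_nonneg (by linarith)]
  exact div_le_one_of_le₀ hodd (by linarith)

lemma hasSum_arctanDivSeries {t : ℝ} (ht : |t| < 1) :
    HasSum (fun n : ℕ => (-1) ^ n / (2 * n + 1) * t ^ n) (arctanDivSeries.sum t) := by
  have hmem : t ∈ Metric.eball (0 : ℝ) arctanDivSeries.radius := by
    refine mem_eball_zero_iff.2 (lt_of_lt_of_le ?_ one_le_radius_arctanDivSeries)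
    rwa [enorm_eq_nnnorm, ENNReal.coe_lt_one_iff, ← NNReal.coe_lt_one, coe_nnnorm,
      Real.norm_eq_abs]
  simpa [arctanDivSeries, ofScalars_apply_eq, mul_comm] using arctanDivSeries.hasSum hmem

lemma arctanDivSeries_sum_sq {x : ℝ} (hx0 : x ≠ 0) (hx : |x| < 1) :
    arctanDivSeries.sum (x ^ 2) = arctan x / x := by
  have hx2 : |x ^ 2| < 1 := by
    rwa [abs_pow, sq_lt_one_iff₀ (abs_nonneg x)]
  rw [eq_div_iff hx0, mul_comm]
  refine ((hasSum_arctanDivSeries hx2).mul_left x).unique ?_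
  refine (hasSum_arctan hx).congr_fun fun n => ?_
  push_cast
  ring

section
variable {E F : Type*} [NormedAddCommGroup E] [InnerProductSpace ℝ E] [NormedAddCommGroup F]
  [NormedSpace ℝ F]

lemma analyticAt_arctan_norm_div_norm {x : E} (hx : x ≠ 0) :
    AnalyticAt ℝ (fun y => arctan ‖y‖ / ‖y‖) x :=
  ((contDiff_arctan.contDiffAt.comp x (contDiffAt_norm ℝ hx)).div (contDiffAt_norm ℝ hx)
    (norm_ne_zero_iff.2 hx)).analyticAt

lemma analyticAt_arctanDivSeries_sum_norm_sq :
    AnalyticAt ℝ (fun y : E => arctanDivSeries.sum (‖y‖ ^ 2)) 0 :=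
  (arctanDivSeries.hasFPowerSeriesOnBall
    (zero_lt_one.trans_le one_le_radius_arctanDivSeries)).analyticAt.comp_of_eq
    (contDiff_norm_sq ℝ (n := ω)).contDiffAt.analyticAt (by simp)

lemma analyticAt_zero_arctan_norm_div_norm_smul {f : E → F} (hf : AnalyticAt ℝ f 0)
    (hf0 : f 0 = 0) : AnalyticAt ℝ (fun y => (arctan ‖y‖ / ‖y‖) • f y) 0 := by
  refine (analyticAt_arctanDivSeries_sum_norm_sq.smul hf).congr ?_
  filter_upwards [Metric.ball_mem_nhds (0 : E) one_pos] with y hy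
  rcases eq_or_ne y 0 with rfl | hy0
  · simp [hf0]
  · rw [mem_ball_zero_iff, ← abs_norm] at hy
    rw [Pi.smul_apply', arctanDivSeries_sum_sq (norm_ne_zero_iff.2 hy0) hy]

theorem analyticOnNhd_arctan_norm_div_norm_smul {f : E → F} (hf : AnalyticOnNhd ℝ f Set.univ)
    (hf0 : f 0 = 0) : AnalyticOnNhd ℝ (fun y => (arctan ‖y‖ / ‖y‖) • f y) Set.univ := by
  intro x _
  rcases eq_or_ne x 0 with rfl | hx
  · exact analyticAt_zero_arctan_norm_div_norm_smul (hf 0 trivial) hf0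
  · exact (analyticAt_arctan_norm_div_norm hx).smul (hf x trivial)

end

theorem E_real_analytic_general
    (N : ℕ) (A₁ A₂ : Matrix (Fin N) (Fin N) ℂ)
    (E : ℂ → Matrix (Fin N) (Fin N) ℂ)
    (hE : ∀ z : ℂ, z ≠ 0 →
      E z = (Real.arctan ‖z‖ / ‖z‖) • (z.re • A₂ + z.im • A₁))
    (hE0 : E 0 = 0) :
    AnalyticOnNhd ℝ E Set.univ := by
  have hE_eq : E = fun z => (arctan ‖z‖ / ‖z‖) • (z.re • A₂ + z.im • A₁) := by
    funext z
    rcases eq_or_ne z 0 with rfl | hz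
    · simp [hE0]
    · exact hE z hz
  rw [hE_eq]
  refine analyticOnNhd_arctan_norm_div_norm_smul (fun z _ => ?_) (by simp)
  exact ((Complex.reCLM.analyticAt z).smul analyticAt_const).add
    ((Complex.imCLM.analyticAt z).smul analyticAt_const)

/-- Let `N ≥ 1` and let `A₁, A₂` be `N × N` complex matrices.  Define
`E : ℂ → M_N(ℂ)` by `E z = (arctan |z| / |z|) • ((Re z) • A₂ + (Im z) • A₁)` for `z ≠ 0`
and `E 0 = 0`.  Then `E` is real-analytic on all of `ℂ` (viewed as a map of real
normed vector spaces). -/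
theorem E_real_analytic
    (N : ℕ) (hN : 1 ≤ N) (A₁ A₂ : Matrix (Fin N) (Fin N) ℂ)
    (E : ℂ → Matrix (Fin N) (Fin N) ℂ)
    (hE : ∀ z : ℂ, z ≠ 0 →
      E z = (Real.arctan ‖z‖ / ‖z‖) • (z.re • A₂ + z.im • A₁))
    (hE0 : E 0 = 0) :
    AnalyticOnNhd ℝ E Set.univ :=
  E_real_analytic_general N A₁ A₂ E hE hE0
end

section
/- Let A₃, H₁, H₀, L₀ be N×N complex matrices, set L₁ = −i·H₁, and suppose that for every λ ∈ ℂ with |λ| = 1 the matrices A₁(λ) = λ⁻¹H₁ + H₀ + λ·H̄₁ and A₂(λ) = λ⁻¹L₁ + L₀ + λ·L̄₁ satisfy [A₃, A₂(λ)] = −A₁(λ), [A₃, A₁(λ)] = A₂(λ), and [A₁(λ), A₂(λ)] = A₃. Then [A₃, −L₀ + i·H₀] = −i·(−L₀ + i·H₀), and consequently [A₃, [A₃, −L₀ + i·H₀]] = −(−L₀ + i·H₀). -/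
open Matrix

/-- Entrywise complex conjugate of a complex matrix. -/
noncomputable def matConj {N : ℕ} (M : Matrix (Fin N) (Fin N) ℂ) : Matrix (Fin N) (Fin N) ℂ :=
  M.map (starRingEnd ℂ)

/-!
Only the constant Fourier coefficients in `λ` matter. Adding the relations at `λ = 1` and
`λ = -1` kills the `λ^{±1}` terms, so `[A₃, L₀] = -H₀` and `[A₃, H₀] = L₀`. Then `ad A₃` acts
on the span of `L₀, H₀` as a rotation, and `-L₀ + i H₀` is its eigenvector for `-i`; applying
`ad A₃` twice multiplies it by `(-i)² = -1`.
-/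

attribute [local instance] LieRing.ofAssociativeRing

section LieRing

variable {L : Type*} [LieRing L]

theorem lie_eq_of_lie_add_eq_of_lie_sub_eq [IsAddTorsionFree L] {a x y u v : L}
    (hadd : ⁅a, x + y⁆ = u + v) (hsub : ⁅a, x - y⁆ = u - v) : ⁅a, x⁆ = u := by
  apply nsmul_right_injective two_ne_zero
  calc 2 • ⁅a, x⁆ = ⁅a, x + y⁆ + ⁅a, x - y⁆ := by rw [lie_add, lie_sub]; abel
    _ = 2 • u := by rw [hadd, hsub]; abel

variable {R : Type*} [CommRing R] [LieAlgebra R L]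

theorem lie_lie_eq_smul_of_lie_eq_smul {a b : L} {c : R} (h : ⁅a, b⁆ = c • b) :
    ⁅a, ⁅a, b⁆⁆ = (c * c) • b := by
  rw [h, lie_smul, h, smul_smul]

theorem lie_neg_add_smul_eq_neg_smul {i : R} (hi : i * i = -1) {a h l : L}
    (hl : ⁅a, l⁆ = -h) (hh : ⁅a, h⁆ = l) : ⁅a, -l + i • h⁆ = (-i) • (-l + i • h) := by
  rw [lie_add, lie_neg, lie_smul, hl, hh, smul_add, smul_smul, neg_mul, hi]
  simp only [neg_neg, one_smul, neg_smul, smul_neg]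
  abel

end LieRing

theorem bracket_A3_beta0_general
    (N : ℕ) (A₃ H₁ H₀ L₀ L₁ : Matrix (Fin N) (Fin N) ℂ)
    (hcomm : ∀ l : ℂ, ‖l‖ = 1 →
      (A₃ * (l⁻¹ • L₁ + L₀ + l • matConj L₁) - (l⁻¹ • L₁ + L₀ + l • matConj L₁) * A₃
          = -(l⁻¹ • H₁ + H₀ + l • matConj H₁)) ∧
      (A₃ * (l⁻¹ • H₁ + H₀ + l • matConj H₁) - (l⁻¹ • H₁ + H₀ + l • matConj H₁) * A₃
          = l⁻¹ • L₁ + L₀ + l • matConj L₁) ∧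
      ((l⁻¹ • H₁ + H₀ + l • matConj H₁) * (l⁻¹ • L₁ + L₀ + l • matConj L₁)
          - (l⁻¹ • L₁ + L₀ + l • matConj L₁) * (l⁻¹ • H₁ + H₀ + l • matConj H₁) = A₃)) :
    A₃ * (-L₀ + Complex.I • H₀) - (-L₀ + Complex.I • H₀) * A₃
        = (-Complex.I) • (-L₀ + Complex.I • H₀) ∧
    A₃ * (A₃ * (-L₀ + Complex.I • H₀) - (-L₀ + Complex.I • H₀) * A₃)
        - (A₃ * (-L₀ + Complex.I • H₀) - (-L₀ + Complex.I • H₀) * A₃) * A₃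
        = -(-L₀ + Complex.I • H₀) := by
  have : IsAddTorsionFree (Matrix (Fin N) (Fin N) ℂ) := .of_module_rat _
  obtain ⟨hL_one, hH_one, -⟩ := hcomm 1 (by simp)
  obtain ⟨hL_neg, hH_neg, -⟩ := hcomm (-1) (by simp)
  simp only [← Ring.lie_def, inv_one, one_smul, inv_neg, neg_smul] at hL_one hH_one hL_neg hH_neg
  simp only [← Ring.lie_def]
  have hL₀ : ⁅A₃, L₀⁆ = -H₀ :=
    lie_eq_of_lie_add_eq_of_lie_sub_eq (y := L₁ + matConj L₁) (v := -(H₁ + matConj H₁))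
      (by abel_nf at hL_one ⊢; exact hL_one) (by abel_nf at hL_neg ⊢; exact hL_neg)
  have hH₀ : ⁅A₃, H₀⁆ = L₀ :=
    lie_eq_of_lie_add_eq_of_lie_sub_eq (y := H₁ + matConj H₁) (v := L₁ + matConj L₁)
      (by abel_nf at hH_one ⊢; exact hH_one) (by abel_nf at hH_neg ⊢; exact hH_neg)
  have hβ : ⁅A₃, -L₀ + Complex.I • H₀⁆ = (-Complex.I) • (-L₀ + Complex.I • H₀) :=
    lie_neg_add_smul_eq_neg_smul Complex.I_mul_I hL₀ hH₀
  refine ⟨hβ, ?_⟩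
  rw [lie_lie_eq_smul_of_lie_eq_smul hβ, neg_mul_neg, Complex.I_mul_I, neg_one_smul]

/-- `[A₃, -L₀ + i H₀] = -i (-L₀ + i H₀)` and consequently
`[A₃, [A₃, -L₀ + i H₀]] = -(-L₀ + i H₀)`. -/
theorem bracket_A3_beta0
    (N : ℕ) (hN : 1 ≤ N) (A₃ H₁ H₀ L₀ L₁ : Matrix (Fin N) (Fin N) ℂ)
    (hL₁ : L₁ = (-Complex.I) • H₁)
    (hcomm : ∀ l : ℂ, ‖l‖ = 1 →
      (A₃ * (l⁻¹ • L₁ + L₀ + l • matConj L₁) - (l⁻¹ • L₁ + L₀ + l • matConj L₁) * A₃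
          = -(l⁻¹ • H₁ + H₀ + l • matConj H₁)) ∧
      (A₃ * (l⁻¹ • H₁ + H₀ + l • matConj H₁) - (l⁻¹ • H₁ + H₀ + l • matConj H₁) * A₃
          = l⁻¹ • L₁ + L₀ + l • matConj L₁) ∧
      ((l⁻¹ • H₁ + H₀ + l • matConj H₁) * (l⁻¹ • L₁ + L₀ + l • matConj L₁)
          - (l⁻¹ • L₁ + L₀ + l • matConj L₁) * (l⁻¹ • H₁ + H₀ + l • matConj H₁) = A₃)) :
    A₃ * (-L₀ + Complex.I • H₀) - (-L₀ + Complex.I • H₀) * A₃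
        = (-Complex.I) • (-L₀ + Complex.I • H₀) ∧
    A₃ * (A₃ * (-L₀ + Complex.I • H₀) - (-L₀ + Complex.I • H₀) * A₃)
        - (A₃ * (-L₀ + Complex.I • H₀) - (-L₀ + Complex.I • H₀) * A₃) * A₃
        = -(-L₀ + Complex.I • H₀) :=
  bracket_A3_beta0_general N A₃ H₁ H₀ L₀ L₁ hcomm
end

section
/- Let A₃, H₁, H₀, L₀ be N×N complex matrices, set L₁ = −i·H₁, and suppose that for every λ ∈ ℂ with |λ| = 1 the matrices A₁(λ) = λ⁻¹H₁ + H₀ + λ·H̄₁ and A₂(λ) = λ⁻¹L₁ + L₀ + λ·L̄₁ satisfy [A₃, A₂(λ)] = −A₁(λ), [A₃, A₁(λ)] = A₂(λ), and [A₁(λ), A₂(λ)] = A₃. Then [L̄₁, −L₀ + i·H₀] = 0. -/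
/-!
Expanding `[A₁(λ), A₂(λ)]` in powers of `λ`, the `λ^{±2}` terms vanish because `L₁` and `L̄₁`
are scalar multiples of `H₁` and `H̄₁`, so the bracket is `λ⁻¹ C₋₁ + C₀ + λ C₁`. It equals the
constant `A₃` on the unit circle, and sampling at `λ = ±1, ±i` forces `C₁ = 0`. The bracket
`[L̄₁, -L₀ + i H₀]` is `-i C₁`.
-/

open Matrix

attribute [local instance] LieRing.ofAssociativeRing

theorem matConj_smul {N : ℕ} (c : ℂ) (M : Matrix (Fin N) (Fin N) ℂ) :
    matConj (c • M) = starRingEnd ℂ c • matConj M := by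
  ext i j
  simp [matConj]

theorem lie_laurent_eq {K L : Type*} [Field K] [LieRing L] [LieAlgebra K L]
    {l : K} (hl : l ≠ 0) (a b : K) (X Y Z W : L) :
    ⁅l⁻¹ • X + Y + l • Z, l⁻¹ • (a • X) + W + l • (b • Z)⁆ =
      l⁻¹ • (⁅X, W⁆ + a • ⁅Y, X⁆) + (⁅Y, W⁆ + (b - a) • ⁅X, Z⁆) + l • (⁅Z, W⁆ + b • ⁅Y, Z⁆) := by
  simp only [add_lie, lie_add, smul_lie, lie_smul, lie_self, ← lie_skew Z X]
  match_scalars <;> field_simp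
  ring

theorem eq_zero_of_laurent_eq_const_on_circle {M : Type*} [AddCommGroup M] [Module ℂ M]
    {a b c d : M} (h : ∀ l : ℂ, ‖l‖ = 1 → l⁻¹ • a + b + l • c = d) : c = 0 := by
  have h₁ := h 1 (by simp)
  have h₂ := h (-1) (by simp)
  have h₃ := h Complex.I (by simp)
  have h₄ := h (-Complex.I) (by simp)
  simp only [inv_one, inv_neg, Complex.inv_I, one_smul, neg_neg] at h₁ h₂ h₃ h₄
  linear_combination (norm := (match_scalars <;> ring_nf <;> simp [Complex.I_sq]))
    (1 / 4 : ℂ) • (h₁ - h₂) - (Complex.I / 4) • (h₃ - h₄)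

theorem bracket_L1bar_beta0_general
    (N : ℕ) (A₃ H₁ H₀ L₀ L₁ : Matrix (Fin N) (Fin N) ℂ)
    (hL₁ : L₁ = (-Complex.I) • H₁)
    (hcomm : ∀ l : ℂ, ‖l‖ = 1 →
      (A₃ * (l⁻¹ • L₁ + L₀ + l • matConj L₁) - (l⁻¹ • L₁ + L₀ + l • matConj L₁) * A₃
          = -(l⁻¹ • H₁ + H₀ + l • matConj H₁)) ∧
      (A₃ * (l⁻¹ • H₁ + H₀ + l • matConj H₁) - (l⁻¹ • H₁ + H₀ + l • matConj H₁) * A₃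
          = l⁻¹ • L₁ + L₀ + l • matConj L₁) ∧
      ((l⁻¹ • H₁ + H₀ + l • matConj H₁) * (l⁻¹ • L₁ + L₀ + l • matConj L₁)
          - (l⁻¹ • L₁ + L₀ + l • matConj L₁) * (l⁻¹ • H₁ + H₀ + l • matConj H₁) = A₃)) :
    matConj L₁ * (-L₀ + Complex.I • H₀) - (-L₀ + Complex.I • H₀) * matConj L₁ = 0 := by
  have hL₁bar : matConj L₁ = Complex.I • matConj H₁ := by
    rw [hL₁, matConj_smul]
    simp
  have hcoeff : ⁅matConj H₁, L₀⁆ + Complex.I • ⁅H₀, matConj H₁⁆ = 0 := by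
    apply eq_zero_of_laurent_eq_const_on_circle (d := A₃)
    intro l hl
    have hA₃ := (hcomm l hl).2.2
    rw [hL₁bar, hL₁, ← Ring.lie_def] at hA₃
    rwa [lie_laurent_eq (by rintro rfl; simp at hl)] at hA₃
  rw [← Ring.lie_def, hL₁bar]
  calc ⁅Complex.I • matConj H₁, -L₀ + Complex.I • H₀⁆
      = -Complex.I • (⁅matConj H₁, L₀⁆ + Complex.I • ⁅H₀, matConj H₁⁆) := by
        simp only [lie_add, lie_neg, smul_lie, lie_smul, ← lie_skew H₀ (matConj H₁)]
        module
    _ = 0 := by rw [hcoeff, smul_zero]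

/-- `[L̄₁, -L₀ + i H₀] = 0`. -/
theorem bracket_L1bar_beta0
    (N : ℕ) (hN : 1 ≤ N) (A₃ H₁ H₀ L₀ L₁ : Matrix (Fin N) (Fin N) ℂ)
    (hL₁ : L₁ = (-Complex.I) • H₁)
    (hcomm : ∀ l : ℂ, ‖l‖ = 1 →
      (A₃ * (l⁻¹ • L₁ + L₀ + l • matConj L₁) - (l⁻¹ • L₁ + L₀ + l • matConj L₁) * A₃
          = -(l⁻¹ • H₁ + H₀ + l • matConj H₁)) ∧
      (A₃ * (l⁻¹ • H₁ + H₀ + l • matConj H₁) - (l⁻¹ • H₁ + H₀ + l • matConj H₁) * A₃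
          = l⁻¹ • L₁ + L₀ + l • matConj L₁) ∧
      ((l⁻¹ • H₁ + H₀ + l • matConj H₁) * (l⁻¹ • L₁ + L₀ + l • matConj L₁)
          - (l⁻¹ • L₁ + L₀ + l • matConj L₁) * (l⁻¹ • H₁ + H₀ + l • matConj H₁) = A₃)) :
    matConj L₁ * (-L₀ + Complex.I • H₀) - (-L₀ + Complex.I • H₀) * matConj L₁ = 0 :=
  bracket_L1bar_beta0_general N A₃ H₁ H₀ L₀ L₁ hL₁ hcomm
end

section
/- Let p ≥ 2. For every X ∈ ℝ^{p−1}, the matrix M(0,X) satisfies M(0,X)² = (XᵀX) · K, where K is the (p+1)×(p+1) matrix in block form (rows and columns split as 1+1+(p−1)) K = [[1, 1, 0], [−1, −1, 0], [0, 0, 0]], and consequently M(0,X)³ = 0; in particular every element of N = { M(0,X) : X ∈ ℝ^{p−1} } is a nilpotent matrix. -/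
open Matrix

/-- The `(p+1) × (p+1)` real matrix `M(a,X)`, written in block form with rows and columns
split as `1 + 1 + (p-1)`, as `M(a,X) = [[0, a, Xᵀ], [a, 0, -Xᵀ], [X, X, 0]]`. -/
def Mmat (p : ℕ) (a : ℝ) (X : Fin (p - 1) → ℝ) :
    Matrix (Fin 1 ⊕ Fin 1 ⊕ Fin (p - 1)) (Fin 1 ⊕ Fin 1 ⊕ Fin (p - 1)) ℝ :=
  Matrix.of fun i j =>
    match i, j with
    | Sum.inl _, Sum.inl _ => 0
    | Sum.inl _, Sum.inr (Sum.inl _) => a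
    | Sum.inl _, Sum.inr (Sum.inr k) => X k
    | Sum.inr (Sum.inl _), Sum.inl _ => a
    | Sum.inr (Sum.inl _), Sum.inr (Sum.inl _) => 0
    | Sum.inr (Sum.inl _), Sum.inr (Sum.inr k) => -X k
    | Sum.inr (Sum.inr k), Sum.inl _ => X k
    | Sum.inr (Sum.inr k), Sum.inr (Sum.inl _) => X k
    | Sum.inr (Sum.inr _), Sum.inr (Sum.inr _) => 0

/-- The `(p+1) × (p+1)` Minkowski form `J = diag(-1, 1, …, 1)`. -/
def Jmat (p : ℕ) :
    Matrix (Fin 1 ⊕ Fin 1 ⊕ Fin (p - 1)) (Fin 1 ⊕ Fin 1 ⊕ Fin (p - 1)) ℝ :=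
  Matrix.diagonal (Sum.elim (fun _ => -1) (fun _ => 1))

/-- The `(p+1) × (p+1)` matrix `K = [[1, 1, 0], [-1, -1, 0], [0, 0, 0]]` in block form with
rows and columns split as `1 + 1 + (p-1)`. -/
def Kmat (p : ℕ) :
    Matrix (Fin 1 ⊕ Fin 1 ⊕ Fin (p - 1)) (Fin 1 ⊕ Fin 1 ⊕ Fin (p - 1)) ℝ :=
  Matrix.of fun i j =>
    match i, j with
    | Sum.inl _, Sum.inl _ => 1
    | Sum.inl _, Sum.inr (Sum.inl _) => 1
    | Sum.inr (Sum.inl _), Sum.inl _ => -1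
    | Sum.inr (Sum.inl _), Sum.inr (Sum.inl _) => -1
    | _, _ => 0

/-- For every `X ∈ ℝ^{p-1}`, `M(0,X)² = (XᵀX) • K`, hence
`M(0,X)³ = 0`; in particular every element of `N = {M(0,X)}` is nilpotent. -/
theorem Mmat_zero_sq_cube_nilpotent (p : ℕ) (hp : 2 ≤ p) :
    (∀ X : Fin (p - 1) → ℝ,
        Mmat p 0 X * Mmat p 0 X = (X ⬝ᵥ X) • Kmat p) ∧
    (∀ X : Fin (p - 1) → ℝ,
        Mmat p 0 X * Mmat p 0 X * Mmat p 0 X = 0) ∧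
    (∀ A : Matrix (Fin 1 ⊕ Fin 1 ⊕ Fin (p - 1)) (Fin 1 ⊕ Fin 1 ⊕ Fin (p - 1)) ℝ,
        A ∈ {C | ∃ X, C = Mmat p 0 X} → IsNilpotent A) := by
  have hsq : ∀ X : Fin (p - 1) → ℝ,
      Mmat p 0 X * Mmat p 0 X = (X ⬝ᵥ X) • Kmat p := by
    intro X
    ext i j
    rcases i with i | i | i <;> rcases j with j | j | j <;>
      simp [Matrix.mul_apply, Mmat, Kmat, Fintype.sum_sum_type, dotProduct,
        Matrix.smul_apply, mul_comm]
  have hKM : ∀ X : Fin (p - 1) → ℝ, Kmat p * Mmat p 0 X = 0 := by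
    intro X
    ext i j
    rcases i with i | i | i <;> rcases j with j | j | j <;>
      simp [Matrix.mul_apply, Mmat, Kmat, Fintype.sum_sum_type]
  have hcube : ∀ X : Fin (p - 1) → ℝ,
      Mmat p 0 X * Mmat p 0 X * Mmat p 0 X = 0 := by
    intro X
    rw [hsq, Matrix.smul_mul, hKM, smul_zero]
  refine ⟨hsq, hcube, ?_⟩
  rintro A ⟨X, rfl⟩
  exact ⟨3, by rw [pow_succ, pow_two]; exact hcube X⟩
end
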